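/- arXiv:2006.06179 — 5 statements merged into one kernel-verified Lean document; each statement's English description precedes it below -/
import Mathlib

section
/- Let x = ∑_{i∈S} γᵢ Dᵢ⁰ with |S| = k, where D₀ has unit-norm columns and mutual coherence μ₀, and let γ₁ be the entry of largest magnitude. Suppose d̂ is a unit vector with ‖D₁⁰ − d̂‖²₂ ≤ ε, where 1 ∈ S is the index of γ₁. Then |xᵀ d̂| ≥ ((1 − ε/2) − (k−1)(μ₀ + √ε)) |γ₁|. -/
open scoped RealInnerProductSpace BigOperators

open Finset

/-!
Expanding `⟪x, d̂⟫ = γ₁ ⟪D₁, d̂⟫ + ∑_{i ≠ 1} γᵢ ⟪Dᵢ, d̂⟫`, the leading inner product of two unit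
vectors equals `1 - ‖D₁ - d̂‖² / 2 ≥ 1 - ε/2`, while each of the other `k - 1` inner products is
at most `μ₀ + √ε` in absolute value: replacing `d̂` by `D₁` costs at most `‖D₁ - d̂‖ ≤ √ε`, and
`|⟪Dᵢ, D₁⟫| ≤ μ₀`. The reverse triangle inequality then gives the bound.
-/

lemma abs_sub_sum_erase_le_abs_sum {ι α : Type*} [DecidableEq ι] [AddCommGroup α] [LinearOrder α]
    [IsOrderedAddMonoid α] {s : Finset ι} {i : ι} (hi : i ∈ s) (f : ι → α) :
    |f i| - ∑ j ∈ s.erase i, |f j| ≤ |∑ j ∈ s, f j| := by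
  rw [← add_sum_erase s f hi]
  calc |f i| - ∑ j ∈ s.erase i, |f j| ≤ |f i| - |∑ j ∈ s.erase i, f j| :=
        sub_le_sub_left (abs_sum_le_sum_abs f _) _
    _ ≤ |f i + ∑ j ∈ s.erase i, f j| := by
        simpa using abs_sub_abs_le_abs_sub (f i) (-∑ j ∈ s.erase i, f j)

section InnerProduct

variable {E : Type*} [NormedAddCommGroup E] [InnerProductSpace ℝ E]

lemma real_inner_eq_one_sub_half_norm_sub_sq {u v : E} (hu : ‖u‖ = 1) (hv : ‖v‖ = 1) :
    ⟪u, v⟫ = 1 - ‖u - v‖ ^ 2 / 2 := by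
  rw [norm_sub_sq_real, hu, hv]
  ring

lemma abs_real_inner_le_abs_real_inner_add_norm_mul_norm_sub (a u v : E) :
    |⟪a, v⟫| ≤ |⟪a, u⟫| + ‖a‖ * ‖u - v‖ := by
  calc |⟪a, v⟫| = |⟪a, u⟫ + ⟪a, v - u⟫| := by rw [inner_sub_right, add_sub_cancel]
    _ ≤ |⟪a, u⟫| + |⟪a, v - u⟫| := abs_add_le _ _
    _ ≤ |⟪a, u⟫| + ‖a‖ * ‖u - v‖ := by
      rw [norm_sub_rev]
      gcongr
      exact abs_real_inner_le_norm a (v - u)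

end InnerProduct

theorem stmt7_general {d p : ℕ} (D : Fin p → EuclideanSpace ℝ (Fin d))
    (hunit : ∀ i, ‖D i‖ = 1)
    (μ0 : ℝ) (hcoh : ∀ i j, i ≠ j → |⟪D i, D j⟫| ≤ μ0)
    (S : Finset (Fin p)) (k : ℕ) (hS : S.card = k)
    (γ : Fin p → ℝ) (i₁ : Fin p) (hi₁ : i₁ ∈ S) (hmax : ∀ i ∈ S, |γ i| ≤ |γ i₁|)
    (ε : ℝ)
    (dh : EuclideanSpace ℝ (Fin d)) (hdh : ‖dh‖ = 1)
    (hclose : ‖D i₁ - dh‖ ^ 2 ≤ ε) :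
    ((1 - ε / 2) - ((k : ℝ) - 1) * (μ0 + Real.sqrt ε)) * |γ i₁|
      ≤ |⟪∑ i ∈ S, γ i • D i, dh⟫| := by
  have hdist : ‖D i₁ - dh‖ ≤ √ε := Real.le_sqrt_of_sq_le hclose
  have hlead : (1 - ε / 2) * |γ i₁| ≤ |⟪γ i₁ • D i₁, dh⟫| := by
    rw [real_inner_smul_left, abs_mul, mul_comm,
      real_inner_eq_one_sub_half_norm_sub_sq (hunit i₁) hdh]
    refine mul_le_mul_of_nonneg_left (le_trans ?_ (le_abs_self _)) (abs_nonneg _)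
    linarith
  have hrest : ∀ j ∈ S.erase i₁, |⟪γ j • D j, dh⟫| ≤ (μ0 + √ε) * |γ i₁| := by
    intro j hj
    have hatom : |⟪D j, dh⟫| ≤ μ0 + √ε :=
      calc |⟪D j, dh⟫| ≤ |⟪D j, D i₁⟫| + ‖D j‖ * ‖D i₁ - dh‖ :=
            abs_real_inner_le_abs_real_inner_add_norm_mul_norm_sub _ _ _
        _ ≤ μ0 + √ε := by
            rw [hunit, one_mul]
            exact add_le_add (hcoh j i₁ (ne_of_mem_erase hj)) hdist
    rw [real_inner_smul_left, abs_mul, mul_comm (μ0 + √ε)]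
    exact mul_le_mul (hmax j (mem_of_mem_erase hj)) hatom (abs_nonneg _) (abs_nonneg _)
  calc ((1 - ε / 2) - ((k : ℝ) - 1) * (μ0 + √ε)) * |γ i₁|
      = (1 - ε / 2) * |γ i₁| - ∑ _j ∈ S.erase i₁, (μ0 + √ε) * |γ i₁| := by
        rw [sum_const, card_erase_of_mem hi₁, hS, nsmul_eq_mul,
          Nat.cast_pred (hS ▸ card_pos.mpr ⟨i₁, hi₁⟩)]
        ring
    _ ≤ |⟪γ i₁ • D i₁, dh⟫| - ∑ j ∈ S.erase i₁, |⟪γ j • D j, dh⟫| :=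
        sub_le_sub hlead (sum_le_sum hrest)
    _ ≤ |∑ j ∈ S, ⟪γ j • D j, dh⟫| := abs_sub_sum_erase_le_abs_sum hi₁ (fun j ↦ ⟪γ j • D j, dh⟫)
    _ = |⟪∑ i ∈ S, γ i • D i, dh⟫| := by rw [sum_inner]

/-- Let `x = ∑_{i∈S} γᵢ Dᵢ⁰` with `|S| = k`, where `D₀` has unit-norm columns and mutual
coherence at most `μ₀`, and let `γ_{i₁}` be the entry of largest magnitude. If `d̂` is a unit
vector with `‖D_{i₁}⁰ − d̂‖² ≤ ε`, then
`|xᵀ d̂| ≥ ((1 − ε/2) − (k−1)(μ₀ + √ε)) |γ_{i₁}|`. -/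
theorem stmt7 {d p : ℕ} (D : Fin p → EuclideanSpace ℝ (Fin d))
    (hunit : ∀ i, ‖D i‖ = 1)
    (μ0 : ℝ) (hμ0 : 0 ≤ μ0) (hcoh : ∀ i j, i ≠ j → |⟪D i, D j⟫| ≤ μ0)
    (S : Finset (Fin p)) (k : ℕ) (hS : S.card = k)
    (γ : Fin p → ℝ) (i₁ : Fin p) (hi₁ : i₁ ∈ S) (hmax : ∀ i ∈ S, |γ i| ≤ |γ i₁|)
    (ε : ℝ) (hε : 0 ≤ ε)
    (dh : EuclideanSpace ℝ (Fin d)) (hdh : ‖dh‖ = 1)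
    (hclose : ‖D i₁ - dh‖ ^ 2 ≤ ε) :
    ((1 - ε / 2) - ((k : ℝ) - 1) * (μ0 + Real.sqrt ε)) * |γ i₁|
      ≤ |⟪∑ i ∈ S, γ i • D i, dh⟫| :=
  stmt7_general D hunit μ0 hcoh S k hS γ i₁ hi₁ hmax ε dh hdh hclose
end

section
/- (Correct atom selection by single-step matching pursuit) Let D₀ ∈ R^{d×p} have unit-norm columns with coherence μ₀ = μ(D₀), and let D̂ = [D̂₀, A] ∈ R^{d×p′} have unit-norm columns, where for each i ≤ p, ‖Dᵢ⁰ − D̂ᵢ⁰‖²₂ ≤ ε (the i-th column of D̂₀ is ε-close to Dᵢ⁰), and the cross-coherence μ(D₀, A) = max_{i,ℓ}|⟨Dᵢ⁰, A_ℓ⟩|. If x = D₀γ with ‖γ‖₀ ≤ k and k ≤ (1 − ε/2 + √ε + μ₀)/(μ₀ + √ε + μ(D₀, A)), then argmax_j |xᵀ D̂ⱼ| lies among the columns of D̂₀ (i.e., the most correlated atom is ε-close to a true atom). -/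
/-!
Let `i` be an index of a largest coefficient `|γ i| = M`. Against a column `a` of `A` every
true atom correlates by at most `μA`, so `|⟪x, a⟫| ≤ k M μA`. The matched column `D̂ᵢ` satisfies
`⟪Dᵢ⁰, D̂ᵢ⟫ = 1 - ‖Dᵢ⁰ - D̂ᵢ‖² / 2 ≥ 1 - ε/2`, while each other true atom correlates with it by at
most `μ₀ + √ε`, so `|⟪x, D̂ᵢ⟫| ≥ M (1 - ε/2) - (k - 1) M (μ₀ + √ε)`. The bound on `k` is exactly
the condition for the second estimate to dominate the first.
-/

open scoped RealInnerProductSpace BigOperators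
open Finset

lemma abs_sum_mul_le_card_filter_ne_zero_mul {ι : Type*} (s : Finset ι) {f g : ι → ℝ} {M c : ℝ}
    (hf : ∀ j ∈ s, |f j| ≤ M) (hg : ∀ j ∈ s, f j ≠ 0 → |g j| ≤ c) :
    |∑ j ∈ s, f j * g j| ≤ #{j ∈ s | f j ≠ 0} * (M * c) := by
  rw [← sum_filter_of_ne fun j _ h => left_ne_zero_of_mul h, ← nsmul_eq_mul]
  refine (abs_sum_le_sum_abs _ _).trans (sum_le_card_nsmul _ _ _ fun j hj => ?_)
  obtain ⟨hjs, hj0⟩ := mem_filter.mp hj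
  rw [abs_mul]
  exact mul_le_mul (hf j hjs) (hg j hjs hj0) (abs_nonneg _) ((abs_nonneg _).trans (hf j hjs))

section InnerProductSpace

variable {E : Type*} [SeminormedAddCommGroup E] [InnerProductSpace ℝ E]

lemma real_inner_sum_smul_left {ι : Type*} (s : Finset ι) (γ : ι → ℝ) (v : ι → E) (a : E) :
    ⟪∑ j ∈ s, γ j • v j, a⟫ = ∑ j ∈ s, γ j * ⟪v j, a⟫ := by
  simp only [sum_inner, real_inner_smul_left]

lemma real_inner_eq_one_sub_norm_sub_sq_div_two {u w : E} (hu : ‖u‖ = 1) (hw : ‖w‖ = 1) :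
    ⟪u, w⟫ = 1 - ‖u - w‖ ^ 2 / 2 := by
  rw [norm_sub_sq_real, hu, hw]
  ring

lemma abs_real_inner_le_abs_real_inner_add_norm_sub {u : E} (hu : ‖u‖ = 1) (w w' : E) :
    |⟪u, w⟫| ≤ |⟪u, w'⟫| + ‖w' - w‖ := by
  calc |⟪u, w⟫| = |⟪u, w'⟫ - ⟪u, w' - w⟫| := by rw [inner_sub_right, sub_sub_cancel]
    _ ≤ |⟪u, w'⟫| + |⟪u, w' - w⟫| := abs_sub _ _
    _ ≤ |⟪u, w'⟫| + ‖w' - w‖ := by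
      gcongr
      simpa [hu] using abs_real_inner_le_norm u (w' - w)

variable {ι : Type*} [Fintype ι] (v : ι → E) (γ : ι → ℝ)

lemma abs_inner_sum_smul_le {a : E} {M μ : ℝ} (hγ : ∀ j, |γ j| ≤ M) (ha : ∀ j, |⟪v j, a⟫| ≤ μ) :
    |⟪∑ j, γ j • v j, a⟫| ≤ #{j | γ j ≠ 0} * (M * μ) := by
  rw [real_inner_sum_smul_left]
  exact abs_sum_mul_le_card_filter_ne_zero_mul _ (fun j _ => hγ j) fun j _ _ => ha j

lemma le_abs_inner_sum_smul {i : ι} (hγi : γ i ≠ 0) (hi : ∀ j, |γ j| ≤ |γ i|) {b : E} {α β : ℝ}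
    (hb : α ≤ ⟪v i, b⟫) (hb' : ∀ j ≠ i, |⟪v j, b⟫| ≤ β) :
    |γ i| * α - ((#{j | γ j ≠ 0} : ℝ) - 1) * (|γ i| * β) ≤ |⟪∑ j, γ j • v j, b⟫| := by
  classical
  have hiS : i ∈ ({j | γ j ≠ 0} : Finset ι) := by simpa using hγi
  have hrest : |∑ j ∈ univ.erase i, γ j * ⟪v j, b⟫|
      ≤ ((#{j | γ j ≠ 0} : ℝ) - 1) * (|γ i| * β) := by
    have hcard : #{j ∈ univ.erase i | γ j ≠ 0} = #{j | γ j ≠ 0} - 1 := by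
      rw [filter_erase, card_erase_of_mem hiS]
    calc _ ≤ #{j ∈ univ.erase i | γ j ≠ 0} * (|γ i| * β) :=
          abs_sum_mul_le_card_filter_ne_zero_mul _ (fun j _ => hi j)
            fun j hj _ => hb' j (ne_of_mem_erase hj)
      _ = _ := by rw [hcard, Nat.cast_sub (card_pos.mpr ⟨i, hiS⟩), Nat.cast_one]
  have hlead : |γ i| * α ≤ |γ i * ⟪v i, b⟫| := by
    rw [abs_mul]
    exact mul_le_mul_of_nonneg_left (hb.trans (le_abs_self _)) (abs_nonneg _)
  rw [real_inner_sum_smul_left, ← add_sum_erase _ _ (mem_univ i)]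
  linarith [abs_sub_abs_le_abs_add (γ i * ⟪v i, b⟫) (∑ j ∈ univ.erase i, γ j * ⟪v j, b⟫)]

theorem abs_inner_sum_smul_le_of_dominant {k : ℕ} (hγ : #{j | γ j ≠ 0} ≤ k) {i : ι}
    (hi : ∀ j, |γ j| ≤ |γ i|) {a b : E} {α β μ : ℝ} (hβ : 0 ≤ β) (hμ : 0 ≤ μ)
    (ha : ∀ j, |⟪v j, a⟫| ≤ μ) (hb : α ≤ ⟪v i, b⟫) (hb' : ∀ j ≠ i, |⟪v j, b⟫| ≤ β)
    (hk : k * μ ≤ α - (k - 1) * β) :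
    |⟪∑ j, γ j • v j, a⟫| ≤ |⟪∑ j, γ j • v j, b⟫| := by
  by_cases hγi : γ i = 0
  · have hzero : ∀ j, γ j = 0 := fun j => abs_nonpos_iff.mp (by simpa [hγi] using hi j)
    simp [hzero]
  have hM : 0 ≤ |γ i| := abs_nonneg _
  have hk' : (#{j | γ j ≠ 0} : ℝ) ≤ k := by exact_mod_cast hγ
  have hupper := abs_inner_sum_smul_le v γ hi ha
  have hlower := le_abs_inner_sum_smul v γ hγi hi hb hb'
  linarith [mul_le_mul_of_nonneg_left hk hM, mul_le_mul_of_nonneg_right hk' (mul_nonneg hM hμ),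
    mul_le_mul_of_nonneg_right hk' (mul_nonneg hM hβ)]

end InnerProductSpace

theorem stmt9_general {d p m q k : ℕ} (hp : 0 < p) (hpm : p ≤ m)
    (D0 : Fin p → EuclideanSpace ℝ (Fin d))
    (Dh0 : Fin m → EuclideanSpace ℝ (Fin d))
    (A : Fin q → EuclideanSpace ℝ (Fin d))
    (hD0 : ∀ i, ‖D0 i‖ = 1) (hDh0 : ∀ i, ‖Dh0 i‖ = 1)
    (μ0 μA ε : ℝ) (hμ0 : 0 ≤ μ0) (hμA : 0 ≤ μA)
    (hcoh : ∀ i j, i ≠ j → |⟪D0 i, D0 j⟫| ≤ μ0)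
    (hcross : ∀ i ℓ, |⟪D0 i, A ℓ⟫| ≤ μA)
    (hmatch : ∀ i : Fin p, ‖D0 i - Dh0 (Fin.castLE hpm i)‖ ^ 2 ≤ ε)
    (γ : Fin p → ℝ) (hsparse : (Finset.univ.filter fun i => γ i ≠ 0).card ≤ k)
    (hk : 1 ≤ k)
    (hkcond : (k : ℝ) ≤ (1 - ε / 2 + Real.sqrt ε + μ0) / (μ0 + Real.sqrt ε + μA)) :
    ∃ i : Fin m, ∀ ℓ : Fin q,
      |⟪∑ j, γ j • D0 j, A ℓ⟫| ≤ |⟪∑ j, γ j • D0 j, Dh0 i⟫| := by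
  have : Nonempty (Fin p) := ⟨⟨0, hp⟩⟩
  obtain ⟨i, hi⟩ := Finite.exists_max fun j => |γ j|
  have hden : 0 < μ0 + Real.sqrt ε + μA := by
    refine (by positivity : (0 : ℝ) ≤ _).lt_of_ne fun h => ?_
    rw [← h, div_zero] at hkcond
    exact absurd hkcond (by exact_mod_cast Nat.not_le.mpr hk)
  have hkα : k * μA ≤ (1 - ε / 2) - (k - 1) * (μ0 + Real.sqrt ε) := by
    linarith [(le_div_iff₀ hden).mp hkcond]
  refine ⟨Fin.castLE hpm i, fun ℓ => abs_inner_sum_smul_le_of_dominant D0 γ hsparse hi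
    (by positivity) hμA (hcross · ℓ) ?_ (fun j hj => ?_) hkα⟩
  · rw [real_inner_eq_one_sub_norm_sub_sq_div_two (hD0 i) (hDh0 _)]
    linarith [hmatch i]
  · calc |⟪D0 j, Dh0 (Fin.castLE hpm i)⟫|
        ≤ |⟪D0 j, D0 i⟫| + ‖D0 i - Dh0 (Fin.castLE hpm i)‖ :=
          abs_real_inner_le_abs_real_inner_add_norm_sub (hD0 j) _ _
      _ ≤ μ0 + Real.sqrt ε := add_le_add (hcoh j i hj) (by simpa using Real.abs_le_sqrt (hmatch i))

/-- Correct atom selection by single-step matching pursuit (Theorem 2 of the paper).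
`D₀ ∈ ℝ^{d×p}` has unit-norm columns with coherence at most `μ₀`; the over-realized dictionary
`D̂ = [D̂₀, A]` has unit-norm columns, each `D̂₀` column `i ≤ p` is `ε`-close (in squared norm)
to `Dᵢ⁰`, and the cross-coherence of `D₀` with `A` is at most `μA`. If `x = D₀ γ` with
`‖γ‖₀ ≤ k` and `k ≤ (1 − ε/2 + √ε + μ₀)/(μ₀ + √ε + μA)`, then the most correlated atom of
`D̂` with `x` lies among the columns of `D̂₀`. -/
theorem stmt9 {d p m q k : ℕ} (hp : 0 < p) (hpm : p ≤ m)
    (D0 : Fin p → EuclideanSpace ℝ (Fin d))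
    (Dh0 : Fin m → EuclideanSpace ℝ (Fin d))
    (A : Fin q → EuclideanSpace ℝ (Fin d))
    (hD0 : ∀ i, ‖D0 i‖ = 1) (hDh0 : ∀ i, ‖Dh0 i‖ = 1) (hA : ∀ ℓ, ‖A ℓ‖ = 1)
    (μ0 μA ε : ℝ) (hμ0 : 0 ≤ μ0) (hμA : 0 ≤ μA) (hε : 0 ≤ ε)
    (hcoh : ∀ i j, i ≠ j → |⟪D0 i, D0 j⟫| ≤ μ0)
    (hcross : ∀ i ℓ, |⟪D0 i, A ℓ⟫| ≤ μA)
    (hmatch : ∀ i : Fin p, ‖D0 i - Dh0 (Fin.castLE hpm i)‖ ^ 2 ≤ ε)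
    (γ : Fin p → ℝ) (hsparse : (Finset.univ.filter fun i => γ i ≠ 0).card ≤ k)
    (hk : 1 ≤ k)
    (hkcond : (k : ℝ) ≤ (1 - ε / 2 + Real.sqrt ε + μ0) / (μ0 + Real.sqrt ε + μA)) :
    ∃ i : Fin m, ∀ ℓ : Fin q,
      |⟪∑ j, γ j • D0 j, A ℓ⟫| ≤ |⟪∑ j, γ j • D0 j, Dh0 i⟫| :=
  stmt9_general hp hpm D0 Dh0 A hD0 hDh0 μ0 μA ε hμ0 hμA hcoh hcross hmatch γ hsparse hk hkcond
end

section
/- (Lower bound of Lemma 1) Let D₀ ∈ R^{d×p} have unit-norm columns, and for each atom Dᵢ⁰ let d(Dᵢ⁰, D̂) = min_{j, c∈{±1}} ‖Dᵢ⁰ − c D̂ⱼ‖²₂ for a unit-norm-column dictionary D̂ ∈ R^{d×p′}. Let x = D₀γ where supp(γ) = S is a uniformly random k-subset of [p] and the nonzeros of γ are i.i.d. mean-zero, unit-variance. Then E[f_x^{[k]}(D̂)] ≤ (k/2)·d(D̂, D₀), where f_x^{[k]}(D̂) = inf_{‖α‖₀ ≤ k} (1/2)‖x − D̂α‖²₂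 and d(D̂, D₀) = (1/p)∑_{i=1}^p d(Dᵢ⁰, D̂). -/
/-!
Fix for each atom `D₀ᵢ` a nearest signed atom `cᵢ D̂ⱼ₍ᵢ₎`. Coding `x = ∑_{i ∈ S} γᵢ D₀ᵢ` by
`∑_{i ∈ S} γᵢ cᵢ D̂ⱼ₍ᵢ₎` is `k`-sparse and leaves the residual `∑_{i ∈ S} γᵢ (D₀ᵢ - cᵢ D̂ⱼ₍ᵢ₎)`;
since the `γᵢ` are uncorrelated with unit second moment, its expected squared norm is
`∑_{i ∈ S} d(D₀ᵢ, D̂)`. Averaging over `S`, each atom lies in a fraction `k / p` of the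
`k`-subsets.
-/

open scoped RealInnerProductSpace BigOperators
open MeasureTheory ProbabilityTheory Finset

section Counting

variable {α : Type*} [DecidableEq α]

theorem sum_powersetCard_sum_eq (s : Finset α) {k : ℕ} (hk : 1 ≤ k) (f : α → ℝ) :
    ∑ S ∈ s.powersetCard k, ∑ i ∈ S, f i = (#s - 1).choose (k - 1) * ∑ i ∈ s, f i := by
  rw [sum_comm' (t' := s) (s' := fun i => (s.powersetCard k).filter ({i} ⊆ ·)), mul_sum]
  · refine sum_congr rfl fun i hi => ?_
    rw [sum_const, card_filter_powersetCard_subset _ _ _ (singleton_subset_iff.2 hi)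
      (by simpa using hk), card_singleton, nsmul_eq_mul]
  · intro S i
    simp only [mem_powersetCard, mem_filter, singleton_subset_iff]
    constructor
    · rintro ⟨⟨hSs, hS⟩, hi⟩
      exact ⟨⟨⟨hSs, hS⟩, hi⟩, hSs hi⟩
    · rintro ⟨⟨⟨hSs, hS⟩, hi⟩, -⟩
      exact ⟨⟨hSs, hS⟩, hi⟩

theorem average_sum_powersetCard_sum (s : Finset α) {k : ℕ} (hks : k ≤ #s) (f : α → ℝ) :
    1 / ((#s).choose k : ℝ) * ∑ S ∈ s.powersetCard k, ∑ i ∈ S, f i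
      = k / #s * ∑ i ∈ s, f i := by
  obtain rfl | hk := Nat.eq_zero_or_pos k
  · simp
  rw [sum_powersetCard_sum_eq s hk, ← mul_assoc]
  congr 1
  obtain ⟨l, rfl⟩ := Nat.exists_eq_add_one_of_ne_zero hk.ne'
  obtain ⟨m, hm⟩ := Nat.exists_eq_add_one_of_ne_zero (by omega : #s ≠ 0)
  have hchoose : ((m + 1 : ℕ) : ℝ) * (m.choose l : ℝ)
      = ((m + 1).choose (l + 1) : ℝ) * (l + 1 : ℕ) := by
    exact_mod_cast Nat.add_one_mul_choose_eq m l
  have hpos : 0 < ((m + 1).choose (l + 1) : ℝ) := by exact_mod_cast Nat.choose_pos (by omega)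
  rw [hm, Nat.add_sub_cancel, Nat.add_sub_cancel]
  field_simp
  linarith

end Counting

section SecondMoment

variable {Ω ι E : Type*} [MeasurableSpace Ω] {μ : Measure Ω}
  [NormedAddCommGroup E] [InnerProductSpace ℝ E] {γ : ι → Ω → ℝ}

theorem norm_sum_smul_sq (S : Finset ι) (g : ι → ℝ) (v : ι → E) :
    ‖∑ i ∈ S, g i • v i‖ ^ 2 = ∑ i ∈ S, ∑ i' ∈ S, g i * g i' * ⟪v i, v i'⟫ := by
  rw [← real_inner_self_eq_norm_sq, sum_inner]
  simp_rw [inner_sum, real_inner_smul_left, real_inner_smul_right, mul_assoc]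

theorem integrable_norm_sum_smul_sq (hprod : ∀ i i', Integrable (fun ω => γ i ω * γ i' ω) μ)
    (S : Finset ι) (v : ι → E) :
    Integrable (fun ω => ‖∑ i ∈ S, γ i ω • v i‖ ^ 2) μ := by
  simp_rw [norm_sum_smul_sq]
  exact integrable_finsetSum _ fun i _ =>
    integrable_finsetSum _ fun i' _ => (hprod i i').mul_const _

theorem integral_norm_sum_smul_sq (hprod : ∀ i i', Integrable (fun ω => γ i ω * γ i' ω) μ)
    (hsq : ∀ i, ∫ ω, γ i ω ^ 2 ∂μ = 1)
    (hcross : Pairwise fun i i' => ∫ ω, γ i ω * γ i' ω ∂μ = 0) (S : Finset ι) (v : ι → E) :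
    ∫ ω, ‖∑ i ∈ S, γ i ω • v i‖ ^ 2 ∂μ = ∑ i ∈ S, ‖v i‖ ^ 2 := by
  simp_rw [norm_sum_smul_sq]
  rw [integral_finsetSum _ fun i _ =>
    integrable_finsetSum _ fun i' _ => (hprod i i').mul_const _]
  refine sum_congr rfl fun i hi => ?_
  rw [integral_finsetSum _ fun i' _ => (hprod i i').mul_const _,
    sum_eq_single_of_mem i hi fun i' _ hne => by
      rw [integral_mul_const, hcross hne.symm, zero_mul],
    integral_mul_const, real_inner_self_eq_norm_sq]
  simp [← sq, hsq]

end SecondMoment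

section SparseCoding

variable {ι ι' E : Type*} [SeminormedAddCommGroup E]

noncomputable def sparseCodingLoss [Fintype ι'] [Module ℝ E] (k : ℕ) (D : ι' → E) (x : E) : ℝ :=
  ⨅ α : {a : ι' → ℝ // #{j | a j ≠ 0} ≤ k}, 1 / 2 * ‖x - ∑ j, (α : ι' → ℝ) j • D j‖ ^ 2

noncomputable def atomDist (x : E) (D : ι' → E) : ℝ :=
  ⨅ j, min (‖x - D j‖ ^ 2) (‖x + D j‖ ^ 2)

variable [Module ℝ E] {k : ℕ}

theorem sparseCodingLoss_nonneg [Fintype ι'] (D : ι' → E) (x : E) :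
    0 ≤ sparseCodingLoss k D x :=
  Real.iInf_nonneg fun _ => by positivity

theorem sparseCodingLoss_le [Fintype ι'] (D : ι' → E) (x : E) (a : ι' → ℝ)
    (ha : #{j | a j ≠ 0} ≤ k) :
    sparseCodingLoss k D x ≤ 1 / 2 * ‖x - ∑ j, a j • D j‖ ^ 2 :=
  ciInf_le ⟨0, by rintro _ ⟨α, rfl⟩; positivity⟩ (⟨a, ha⟩ : {a : ι' → ℝ // #{j | a j ≠ 0} ≤ k})

theorem sparseCodingLoss_sum_smul_le [Fintype ι'] (D : ι' → E) {S : Finset ι} (hS : #S ≤ k)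
    (D0 : ι → E) (g c : ι → ℝ) (j : ι → ι') :
    sparseCodingLoss k D (∑ i ∈ S, g i • D0 i)
      ≤ 1 / 2 * ‖∑ i ∈ S, g i • (D0 i - c i • D (j i))‖ ^ 2 := by
  classical
  set a : ι' → ℝ := ∑ i ∈ S, Pi.single (j i) (g i * c i)
  have hsparse : #{b | a b ≠ 0} ≤ k := by
    refine (card_le_card (t := S.image j) fun b hb => ?_).trans (card_image_le.trans hS)
    obtain ⟨i, hi, hne⟩ := exists_ne_zero_of_sum_ne_zero (by simpa [a] using (mem_filter.1 hb).2)
    refine mem_image.2 ⟨i, hi, ?_⟩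
    by_contra h
    simp [Ne.symm h] at hne
  have hcode : ∑ b, a b • D b = ∑ i ∈ S, (g i * c i) • D (j i) := by
    simp only [a, Finset.sum_apply, sum_smul, Pi.single_apply, ite_smul, zero_smul]
    rw [sum_comm]
    simp
  calc _ ≤ _ := sparseCodingLoss_le D _ a hsparse
    _ = _ := by
      rw [hcode, ← sum_sub_distrib]
      simp_rw [smul_sub, smul_smul]

theorem exists_norm_sub_smul_sq_eq_atomDist [Nonempty ι'] [Finite ι'] (x : E) (D : ι' → E) :
    ∃ j, ∃ c : ℝ, ‖x - c • D j‖ ^ 2 = atomDist x D := by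
  obtain ⟨j, hj⟩ := exists_eq_ciInf_of_finite (f := fun j => min (‖x - D j‖ ^ 2) (‖x + D j‖ ^ 2))
  rcases min_choice (‖x - D j‖ ^ 2) (‖x + D j‖ ^ 2) with h | h
  · exact ⟨j, 1, by rw [one_smul, ← h, hj, atomDist]⟩
  · exact ⟨j, -1, by rw [neg_one_smul, sub_neg_eq_add, ← h, hj, atomDist]⟩

end SparseCoding

theorem integral_sparseCodingLoss_le {Ω ι ι' E : Type*} [MeasurableSpace Ω] {μ : Measure Ω}
    [NormedAddCommGroup E] [InnerProductSpace ℝ E] [Fintype ι'] [Nonempty ι']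
    {γ : ι → Ω → ℝ} (hprod : ∀ i i', Integrable (fun ω => γ i ω * γ i' ω) μ)
    (hsq : ∀ i, ∫ ω, γ i ω ^ 2 ∂μ = 1)
    (hcross : Pairwise fun i i' => ∫ ω, γ i ω * γ i' ω ∂μ = 0)
    {k : ℕ} {S : Finset ι} (hS : #S ≤ k) (D0 : ι → E) (D : ι' → E) :
    ∫ ω, sparseCodingLoss k D (∑ i ∈ S, γ i ω • D0 i) ∂μ
      ≤ 1 / 2 * ∑ i ∈ S, atomDist (D0 i) D := by
  choose j c hjc using fun i => exists_norm_sub_smul_sq_eq_atomDist (D0 i) D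
  calc _ ≤ ∫ ω, 1 / 2 * ‖∑ i ∈ S, γ i ω • (D0 i - c i • D (j i))‖ ^ 2 ∂μ :=
        integral_mono_of_nonneg (ae_of_all _ fun _ => sparseCodingLoss_nonneg _ _)
          ((integrable_norm_sum_smul_sq hprod S _).const_mul _)
          (ae_of_all _ fun ω => sparseCodingLoss_sum_smul_le D hS D0 (γ · ω) c j)
    _ = _ := by rw [integral_const_mul, integral_norm_sum_smul_sq hprod hsq hcross]; simp_rw [hjc]

theorem stmt12_general {Ω : Type*} [MeasurableSpace Ω] {μ : Measure Ω}
    {d p p' k : ℕ} (hp' : 0 < p') (hkp : k ≤ p)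
    (D0 : Fin p → EuclideanSpace ℝ (Fin d)) (Dh : Fin p' → EuclideanSpace ℝ (Fin d))
    (γ : Fin p → Ω → ℝ)
    (hind : iIndepFun γ μ)
    (hL2 : ∀ i, MemLp (γ i) 2 μ)
    (hmean : ∀ i, ∫ ω, γ i ω ∂μ = 0)
    (hvar : ∀ i, ∫ ω, (γ i ω) ^ 2 ∂μ = 1) :
    (1 / (p.choose k : ℝ)) *
        ∑ S ∈ Finset.powersetCard k (Finset.univ : Finset (Fin p)),
          ∫ ω, (⨅ α : {a : Fin p' → ℝ // (Finset.univ.filter fun j => a j ≠ 0).card ≤ k},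
            (1 / 2) * ‖(∑ i ∈ S, γ i ω • D0 i) - ∑ j, (α : Fin p' → ℝ) j • Dh j‖ ^ 2) ∂μ
      ≤ ((k : ℝ) / 2) *
          ((1 / (p : ℝ)) * ∑ i, ⨅ j : Fin p',
            min (‖D0 i - Dh j‖ ^ 2) (‖D0 i + Dh j‖ ^ 2)) := by
  have : Nonempty (Fin p') := ⟨⟨0, hp'⟩⟩
  have hprod : ∀ i i', Integrable (fun ω => γ i ω * γ i' ω) μ :=
    fun i i' => (hL2 i).integrable_mul (hL2 i')
  have hcross : Pairwise fun i i' => ∫ ω, γ i ω * γ i' ω ∂μ = 0 := fun i i' hne => by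
    simpa [hmean] using (hind.indepFun hne).integral_mul_eq_mul_integral (hL2 i).1 (hL2 i').1
  have haverage := average_sum_powersetCard_sum univ (by simpa using hkp)
    fun i => atomDist (D0 i) Dh
  rw [card_univ, Fintype.card_fin] at haverage
  calc _ ≤ 1 / (p.choose k : ℝ) *
        ∑ S ∈ powersetCard k univ, 1 / 2 * ∑ i ∈ S, atomDist (D0 i) Dh := by
        gcongr with S hS
        exact integral_sparseCodingLoss_le hprod hvar hcross (mem_powersetCard.1 hS).2.le D0 Dh
    _ = k / 2 * (1 / p * ∑ i, atomDist (D0 i) Dh) := by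
        rw [← mul_sum, mul_left_comm, haverage]
        ring

/-- Lower bound of Lemma 1: with `x = D₀ γ`, where the support `S` is a uniformly random
`k`-subset of `[p]` and the nonzero coefficients of `γ` are independent with mean zero and
unit variance, the expected `k`-sparse coding loss on `D̂` satisfies
`E[f_x^{[k]}(D̂)] ≤ (k/2) d(D̂, D₀)`, where
`d(D̂, D₀) = (1/p) ∑ᵢ min_{j, c = ±1} ‖Dᵢ⁰ − c D̂ⱼ‖²`. -/
theorem stmt12 {Ω : Type*} [MeasurableSpace Ω] {μ : Measure Ω} [IsProbabilityMeasure μ]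
    {d p p' k : ℕ} (hp : 0 < p) (hp' : 0 < p') (hkp : k ≤ p)
    (D0 : Fin p → EuclideanSpace ℝ (Fin d)) (Dh : Fin p' → EuclideanSpace ℝ (Fin d))
    (hD0 : ∀ i, ‖D0 i‖ = 1) (hDh : ∀ j, ‖Dh j‖ = 1)
    (γ : Fin p → Ω → ℝ)
    (hind : iIndepFun γ μ)
    (hL2 : ∀ i, MemLp (γ i) 2 μ)
    (hmean : ∀ i, ∫ ω, γ i ω ∂μ = 0)
    (hvar : ∀ i, ∫ ω, (γ i ω) ^ 2 ∂μ = 1) :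
    (1 / (p.choose k : ℝ)) *
        ∑ S ∈ Finset.powersetCard k (Finset.univ : Finset (Fin p)),
          ∫ ω, (⨅ α : {a : Fin p' → ℝ // (Finset.univ.filter fun j => a j ≠ 0).card ≤ k},
            (1 / 2) * ‖(∑ i ∈ S, γ i ω • D0 i) - ∑ j, (α : Fin p' → ℝ) j • Dh j‖ ^ 2) ∂μ
      ≤ ((k : ℝ) / 2) *
          ((1 / (p : ℝ)) * ∑ i, ⨅ j : Fin p',
            min (‖D0 i - Dh j‖ ^ 2) (‖D0 i + Dh j‖ ^ 2)) :=
  stmt12_general hp' hkp D0 Dh γ hind hL2 hmean hvar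
end

section
/- (Upper bound of Lemma 1, k = 1 case) Let D₀ ∈ R^{d×p} and D̂ ∈ R^{d×p′} both have unit-norm columns. Let x = γ_i D_i⁰ where i is uniform on [p] and γ_i has mean zero and variance 1. Then E[f_x^{[1]}(D̂)] ≥ (1/4)·d(D̂, D₀), where f_x^{[1]}(D̂) = min_j min_{α∈R} (1/2)‖x − α D̂ⱼ‖²₂ and d(D̂, D₀) = (1/p)∑_{i=1}^p min_{j, c∈{±1}} ‖Dᵢ⁰ − c D̂ⱼ‖²₂. -/
/-!
Projecting `γ • Dᵢ⁰` onto the line through a unit vector `D̂ⱼ` leaves the squared residual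
`γ² (1 - ⟪Dᵢ⁰, D̂ⱼ⟫²)`, so the expected loss is `(1/p) ∑ᵢ minⱼ (1/2)(1 - ⟪Dᵢ⁰, D̂ⱼ⟫²)` by
`E[γ²] = 1`. For unit vectors `min(‖u - v‖², ‖u + v‖²) = 2(1 - |t|)` with `t = ⟪u, v⟫`, which is
at most `2(1 - t²) = 2(1 - |t|)(1 + |t|)`.
-/

open scoped RealInnerProductSpace
open MeasureTheory

section InnerProductSpace

variable {E : Type*} [NormedAddCommGroup E] [InnerProductSpace ℝ E]

theorem iInf_norm_sub_smul_sq (w : E) {v : E} (hv : ‖v‖ = 1) :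
    ⨅ α : ℝ, ‖w - α • v‖ ^ 2 = ‖w‖ ^ 2 - ⟪w, v⟫ ^ 2 := by
  have hsplit : ∀ α : ℝ, ‖w - α • v‖ ^ 2 = (α - ⟪w, v⟫) ^ 2 + (‖w‖ ^ 2 - ⟪w, v⟫ ^ 2) := by
    intro α
    rw [norm_sub_sq_real, inner_smul_right, norm_smul, hv, Real.norm_eq_abs, mul_one, sq_abs]
    ring
  refine IsGLB.ciInf_eq (IsLeast.isGLB ⟨⟨⟪w, v⟫, by simp [hsplit]⟩, ?_⟩)
  rintro _ ⟨α, rfl⟩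
  simpa only [hsplit] using le_add_of_nonneg_left (sq_nonneg (α - ⟪w, v⟫))

theorem iInf_half_norm_smul_sub_smul_sq {u v : E} (hu : ‖u‖ = 1) (hv : ‖v‖ = 1) (c : ℝ) :
    ⨅ α : ℝ, (1 / 2) * ‖c • u - α • v‖ ^ 2 = c ^ 2 * ((1 / 2) * (1 - ⟪u, v⟫ ^ 2)) := by
  rw [← Real.mul_iInf_of_nonneg (by norm_num), iInf_norm_sub_smul_sq _ hv, norm_smul,
    inner_smul_left, hu, Real.norm_eq_abs, mul_one, sq_abs, conj_trivial]
  ring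

theorem min_norm_sub_sq_norm_add_sq_le {u v : E} (hu : ‖u‖ = 1) (hv : ‖v‖ = 1) :
    min (‖u - v‖ ^ 2) (‖u + v‖ ^ 2) ≤ 2 * (1 - ⟪u, v⟫ ^ 2) := by
  obtain ⟨hlow, hhigh⟩ : -1 ≤ ⟪u, v⟫ ∧ ⟪u, v⟫ ≤ 1 :=
    abs_le.mp (by simpa [hu, hv] using abs_real_inner_le_norm u v)
  rw [norm_sub_sq_real, norm_add_sq_real, hu, hv]
  rcases le_total 0 ⟪u, v⟫ with h | h
  · exact (min_le_left _ _).trans (by nlinarith)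
  · exact (min_le_right _ _).trans (by nlinarith)

end InnerProductSpace

theorem stmt15_general {Ω : Type*} [MeasurableSpace Ω] {μ : Measure Ω}
    {d p p' : ℕ} (hp' : 0 < p')
    (D0 : Fin p → EuclideanSpace ℝ (Fin d)) (Dh : Fin p' → EuclideanSpace ℝ (Fin d))
    (hD0 : ∀ i, ‖D0 i‖ = 1) (hDh : ∀ j, ‖Dh j‖ = 1)
    (γ : Ω → ℝ) (hvar : ∫ ω, (γ ω) ^ 2 ∂μ = 1) :
    (1 / 4) * ((1 / (p : ℝ)) * ∑ i, ⨅ j : Fin p',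
        min (‖D0 i - Dh j‖ ^ 2) (‖D0 i + Dh j‖ ^ 2))
      ≤ (1 / (p : ℝ)) * ∑ i, ∫ ω,
          (⨅ j : Fin p', ⨅ α : ℝ, (1 / 2) * ‖γ ω • D0 i - α • Dh j‖ ^ 2) ∂μ := by
  have : Nonempty (Fin p') := Fin.pos_iff_nonempty.mp hp'
  have hloss : ∀ i, ∫ ω, (⨅ j : Fin p', ⨅ α : ℝ, (1 / 2) * ‖γ ω • D0 i - α • Dh j‖ ^ 2) ∂μ
      = ⨅ j : Fin p', (1 / 2) * (1 - ⟪D0 i, Dh j⟫ ^ 2) := by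
    intro i
    simp only [iInf_half_norm_smul_sub_smul_sq (hD0 i) (hDh _),
      ← Real.mul_iInf_of_nonneg (sq_nonneg _)]
    rw [integral_mul_const, hvar, one_mul]
  have hbound : ∀ i, (1 / 4) * ⨅ j : Fin p', min (‖D0 i - Dh j‖ ^ 2) (‖D0 i + Dh j‖ ^ 2)
      ≤ ⨅ j : Fin p', (1 / 2) * (1 - ⟪D0 i, Dh j⟫ ^ 2) := by
    intro i
    rw [Real.mul_iInf_of_nonneg (by norm_num)]
    exact ciInf_mono (Set.finite_range _).bddBelow fun j => by
      linarith [min_norm_sub_sq_norm_add_sq_le (hD0 i) (hDh j)]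
  rw [mul_left_comm, Finset.mul_sum]
  gcongr with i
  rw [hloss]
  exact hbound i

/-- Upper bound of Lemma 1, `k = 1` case: with `x = γ • Dᵢ⁰` where the index `i` is uniform
on `[p]` and the coefficient `γ` has mean zero and unit variance,
`E[f_x^{[1]}(D̂)] ≥ (1/4) d(D̂, D₀)`, where
`f_x^{[1]}(D̂) = min_j min_α (1/2)‖x − α D̂ⱼ‖²` and
`d(D̂, D₀) = (1/p) ∑ᵢ min_{j, c = ±1} ‖Dᵢ⁰ − c D̂ⱼ‖²`. -/
theorem stmt15 {Ω : Type*} [MeasurableSpace Ω] {μ : Measure Ω} [IsProbabilityMeasure μ]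
    {d p p' : ℕ} (hp : 0 < p) (hp' : 0 < p')
    (D0 : Fin p → EuclideanSpace ℝ (Fin d)) (Dh : Fin p' → EuclideanSpace ℝ (Fin d))
    (hD0 : ∀ i, ‖D0 i‖ = 1) (hDh : ∀ j, ‖Dh j‖ = 1)
    (γ : Ω → ℝ) (hL2 : MemLp γ 2 μ)
    (hmean : ∫ ω, γ ω ∂μ = 0) (hvar : ∫ ω, (γ ω) ^ 2 ∂μ = 1) :
    (1 / 4) * ((1 / (p : ℝ)) * ∑ i, ⨅ j : Fin p',
        min (‖D0 i - Dh j‖ ^ 2) (‖D0 i + Dh j‖ ^ 2))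
      ≤ (1 / (p : ℝ)) * ∑ i, ∫ ω,
          (⨅ j : Fin p', ⨅ α : ℝ, (1 / 2) * ‖γ ω • D0 i - α • Dh j‖ ^ 2) ∂μ :=
  stmt15_general hp' D0 Dh hD0 hDh γ hvar
end

section
/- (B-term lower bound) Let D₀ have unit-norm columns with coherence μ₀, let d̂ be a unit vector, and let ν = max_{k≠i*} |⟨d̂, D_k⁰⟩| where i* is the index maximizing |⟨d̂, D_k⁰⟩|. Fix S ⊆ [p] with |S| = k containing an index i, and let γ_{S∖i} have independent mean-zero unit-variance entries. Then E‖(I − d̂ d̂ᵀ) D_{S∖i} γ_{S∖i}‖²₂ ≥ (1 − (k−2)μ₀ − 2ν²)(k−1), provided i* ∉ S∖i or ν bounds all relevant inner products. -/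
open scoped RealInnerProductSpace BigOperators
open MeasureTheory ProbabilityTheory

/-! Removing the `d̂`-component is linear, so the projected vector is again a random combination
`∑ γ_q (D_q⁰ - ⟨d̂, D_q⁰⟩ d̂)`. Since the `γ_q` are uncorrelated with unit variance, the cross terms
vanish in expectation and the expected squared norm is exactly `∑_{q ∈ S∖i} (1 - ⟨d̂, D_q⁰⟩²)`,
which is at least `(k - 1)(1 - ν²)`. -/

section Projection

variable {E : Type*} [NormedAddCommGroup E] [InnerProductSpace ℝ E]

theorem norm_sub_inner_smul_sq_of_norm_eq_one {u : E} (hu : ‖u‖ = 1) (x : E) :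
    ‖x - ⟪u, x⟫ • u‖ ^ 2 = ‖x‖ ^ 2 - ⟪u, x⟫ ^ 2 := by
  rw [norm_sub_sq_real, real_inner_smul_right, norm_smul, mul_pow, hu, real_inner_comm x u,
    Real.norm_eq_abs, sq_abs]
  ring

theorem sum_smul_sub_inner_sum_smul {ι : Type*} (s : Finset ι) (c : ι → ℝ) (v : ι → E) (u : E) :
    (∑ q ∈ s, c q • v q) - ⟪u, ∑ q ∈ s, c q • v q⟫ • u
      = ∑ q ∈ s, c q • (v q - ⟪u, v q⟫ • u) := by
  simp only [inner_sum, real_inner_smul_right, Finset.sum_smul, smul_sub, mul_smul,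
    Finset.sum_sub_distrib]

end Projection

section RandomCombination

variable {Ω : Type*} [MeasurableSpace Ω] {μ : Measure Ω} {ι : Type*} [DecidableEq ι]

theorem integral_mul_eq_ite_of_pairwise_indepFun {γ : ι → Ω → ℝ}
    (hind : Pairwise fun q r => IndepFun (γ q) (γ r) μ) (hL2 : ∀ q, MemLp (γ q) 2 μ) (hmean : ∀ q, ∫ ω, γ q ω ∂μ = 0)
    (hvar : ∀ q, ∫ ω, γ q ω ^ 2 ∂μ = 1) (q r : ι) :
    ∫ ω, γ q ω * γ r ω ∂μ = if q = r then 1 else 0 := by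
  by_cases hqr : q = r
  · subst hqr
    simpa [pow_two] using hvar q
  · simpa [hqr, hmean q, hmean r] using
      (hind hqr).integral_mul_eq_mul_integral (hL2 q).1 (hL2 r).1

theorem integral_norm_sum_smul_sq_s18 {E : Type*} [NormedAddCommGroup E] [InnerProductSpace ℝ E]
    {γ : ι → Ω → ℝ} (hL2 : ∀ q, MemLp (γ q) 2 μ)
    (horth : ∀ q r, ∫ ω, γ q ω * γ r ω ∂μ = if q = r then 1 else 0)
    (s : Finset ι) (v : ι → E) :
    ∫ ω, ‖∑ q ∈ s, γ q ω • v q‖ ^ 2 ∂μ = ∑ q ∈ s, ‖v q‖ ^ 2 := by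
  have hexpand : ∀ ω, ‖∑ q ∈ s, γ q ω • v q‖ ^ 2
      = ∑ q ∈ s, ∑ r ∈ s, γ q ω * γ r ω * ⟪v q, v r⟫ := fun ω => by
    rw [← real_inner_self_eq_norm_sq, sum_inner]
    refine Finset.sum_congr rfl fun q _ => ?_
    rw [inner_sum]
    refine Finset.sum_congr rfl fun r _ => ?_
    rw [real_inner_smul_left, real_inner_smul_right, mul_assoc]
  have hint : ∀ q r, Integrable (fun ω => γ q ω * γ r ω * ⟪v q, v r⟫) μ := fun q r =>
    ((hL2 q).integrable_mul (hL2 r)).mul_const _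
  simp only [hexpand]
  rw [integral_finsetSum s fun q _ => integrable_finsetSum s fun r _ => hint q r]
  refine Finset.sum_congr rfl fun q hq => ?_
  rw [integral_finsetSum s fun r _ => hint q r]
  simp only [integral_mul_const, horth, ite_mul, one_mul, zero_mul, Finset.sum_ite_eq,
    if_pos hq, real_inner_self_eq_norm_sq]

end RandomCombination

theorem stmt18_general {Ω : Type*} [MeasurableSpace Ω] {μ : Measure Ω}
    {d p k : ℕ} (D0 : Fin p → EuclideanSpace ℝ (Fin d))
    (hD0 : ∀ i, ‖D0 i‖ = 1)
    (μ0 : ℝ) (hμ0 : 0 ≤ μ0)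
    (dh : EuclideanSpace ℝ (Fin d)) (hdh : ‖dh‖ = 1)
    (S : Finset (Fin p)) (hS : S.card = k) (i : Fin p) (hi : i ∈ S)
    (ν : ℝ) (hν : ∀ q ∈ S.erase i, |⟪dh, D0 q⟫| ≤ ν)
    (γ : Fin p → Ω → ℝ)
    (hind : iIndepFun γ μ)
    (hL2 : ∀ q, MemLp (γ q) 2 μ)
    (hmean : ∀ q, ∫ ω, γ q ω ∂μ = 0)
    (hvar : ∀ q, ∫ ω, (γ q ω) ^ 2 ∂μ = 1) :
    (1 - ((k : ℝ) - 2) * μ0 - 2 * ν ^ 2) * ((k : ℝ) - 1)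
      ≤ ∫ ω, ‖(∑ q ∈ S.erase i, γ q ω • D0 q) -
          ⟪dh, ∑ q ∈ S.erase i, γ q ω • D0 q⟫ • dh‖ ^ 2 ∂μ := by
  have hk : 1 ≤ k := hS ▸ Finset.card_pos.mpr ⟨i, hi⟩
  have hcard : ((S.erase i).card : ℝ) = k - 1 := by
    rw [Finset.card_erase_of_mem hi, hS, Nat.cast_sub hk, Nat.cast_one]
  have hterm : ∀ q ∈ S.erase i, 1 - ν ^ 2 ≤ ‖D0 q - ⟪dh, D0 q⟫ • dh‖ ^ 2 := fun q hq => by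
    rw [norm_sub_inner_smul_sq_of_norm_eq_one hdh, hD0, one_pow, ← sq_abs ⟪dh, D0 q⟫]
    nlinarith [hν q hq, abs_nonneg ⟪dh, D0 q⟫]
  have hslack : 0 ≤ ((k : ℝ) - 2) * μ0 * ((k : ℝ) - 1) := by
    rcases hk.eq_or_lt with rfl | hk
    · norm_num
    · have : (2 : ℝ) ≤ k := by exact_mod_cast hk
      exact mul_nonneg (mul_nonneg (by linarith) hμ0) (by linarith)
  calc (1 - ((k : ℝ) - 2) * μ0 - 2 * ν ^ 2) * ((k : ℝ) - 1)
      ≤ ∑ _q ∈ S.erase i, (1 - ν ^ 2) := by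
        rw [Finset.sum_const, nsmul_eq_mul, hcard]
        nlinarith [sq_nonneg ν, show (0 : ℝ) ≤ k - 1 by linarith [(Nat.one_le_cast (α := ℝ)).2 hk]]
    _ ≤ ∑ q ∈ S.erase i, ‖D0 q - ⟪dh, D0 q⟫ • dh‖ ^ 2 := Finset.sum_le_sum hterm
    _ = _ := by
      simp only [sum_smul_sub_inner_sum_smul]
      exact (integral_norm_sum_smul_sq_s18 hL2
        (integral_mul_eq_ite_of_pairwise_indepFun (fun _ _ => hind.indepFun) hL2 hmean hvar) _ _).symm

/-- B-term lower bound: with `D₀` having unit-norm columns and coherence at most `μ₀`, a unit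
vector `d̂`, and `ν` bounding `|⟨d̂, D_q⁰⟩|` for all `q ∈ S∖i`, if the coefficients
`γ_{S∖i}` are independent, mean-zero, unit-variance, then
`E ‖(I − d̂ d̂ᵀ) D_{S∖i} γ_{S∖i}‖² ≥ (1 − (k−2) μ₀ − 2ν²)(k−1)`. -/
theorem stmt18 {Ω : Type*} [MeasurableSpace Ω] {μ : Measure Ω} [IsProbabilityMeasure μ]
    {d p k : ℕ} (D0 : Fin p → EuclideanSpace ℝ (Fin d))
    (hD0 : ∀ i, ‖D0 i‖ = 1)
    (μ0 : ℝ) (hμ0 : 0 ≤ μ0) (hcoh : ∀ i j, i ≠ j → |⟪D0 i, D0 j⟫| ≤ μ0)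
    (dh : EuclideanSpace ℝ (Fin d)) (hdh : ‖dh‖ = 1)
    (S : Finset (Fin p)) (hS : S.card = k) (i : Fin p) (hi : i ∈ S)
    (ν : ℝ) (hν : ∀ q ∈ S.erase i, |⟪dh, D0 q⟫| ≤ ν)
    (γ : Fin p → Ω → ℝ)
    (hind : iIndepFun γ μ)
    (hL2 : ∀ q, MemLp (γ q) 2 μ)
    (hmean : ∀ q, ∫ ω, γ q ω ∂μ = 0)
    (hvar : ∀ q, ∫ ω, (γ q ω) ^ 2 ∂μ = 1) :
    (1 - ((k : ℝ) - 2) * μ0 - 2 * ν ^ 2) * ((k : ℝ) - 1)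
      ≤ ∫ ω, ‖(∑ q ∈ S.erase i, γ q ω • D0 q) -
          ⟪dh, ∑ q ∈ S.erase i, γ q ω • D0 q⟫ • dh‖ ^ 2 ∂μ :=
  stmt18_general D0 hD0 μ0 hμ0 dh hdh S hS i hi ν hν γ hind hL2 hmean hvar
end
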